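/- Let H be a real Hilbert space, let A : H → H be an α-inverse strongly monotone mapping (α > 0), and let T : H → H be a nonexpansive mapping such that F(T) ∩ A⁻¹(0) ≠ ∅. Let {λ_n} ⊂ [a, b] for some a, b with 0 < a ≤ b < 2α and {α_n} ⊂ [c, d] for some c, d with 0 < c ≤ d < 1. Given x₀ ∈ H, define y_n = α_n x_n + (1 − α_n) T(x_n − λ_n A x_n) and x_{n+1} = T(y_n − λ_n A y_n). Then {x_n} converges weakly to a point p ∈ F(T) ∩ A⁻¹(0) (in particular p solves the variational inequality VI(F(T), A)), and p = lim_{n→∞} P_{F(T)∩A⁻¹(0)} x_n (strong limit). -/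

import Mathlib

/-!
For every `w ∈ F = F(T) ∩ A⁻¹(0)`, one step of the scheme decreases `‖x n - w‖ ^ 2` by a fixed
multiple of `‖A (x n)‖ ^ 2 + ‖x n - T (x n - λₙ A (x n))‖ ^ 2`, because `I - λA` loses
`λ (2α - λ) ‖A v - A w‖ ^ 2` against an `α`-inverse strongly monotone `A`. So `(x n)` is Fejér
monotone with respect to `F`, and `A (x n) → 0`, `x n - T (x n) → 0`.

Both `A` and `I - T` are inverse strongly monotone (the latter with constant `1/2`); the zero set
of such an operator is closed, convex and weakly closed along bounded sequences, so `F` is closed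
and convex and every weak cluster point of `(x n)` lies in `F`. For a Fejér monotone sequence the
projection inequality gives `‖P x m - P x n‖ ^ 2 ≤ d n ^ 2 - d m ^ 2` for `n ≤ m`, where
`d n = ‖x n - P x n‖` decreases, so `P x n` converges strongly to some `q ∈ F`; the same inequality,
passed to the limit, identifies every weak cluster point with `q`. Weak compactness of balls then
gives `x n ⇀ q`.
-/

open scoped RealInnerProductSpace
open Filter Topology

theorem tendsto_zero_of_succ_add_le {D e : ℕ → ℝ} (hD : ∀ n, 0 ≤ D n) (he : ∀ n, 0 ≤ e n)
    (h : ∀ n, D (n + 1) + e n ≤ D n) : Tendsto e atTop (𝓝 0) := by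
  have hsum : ∀ n, ∑ i ∈ Finset.range n, e i + D n ≤ D 0 := by
    intro n
    induction n with
    | zero => simp
    | succ n ih => rw [Finset.sum_range_succ]; linarith [h n]
  exact (summable_of_sum_range_le he fun n => by linarith [hsum n, hD n]).tendsto_atTop_zero

section NormedAddCommGroup

variable {H : Type*} [NormedAddCommGroup H]

def FejerMonotone (K : Set H) (x : ℕ → H) : Prop :=
  ∀ w ∈ K, ∀ n, ‖x (n + 1) - w‖ ≤ ‖x n - w‖

namespace FejerMonotone

variable {K : Set H} {x : ℕ → H}

theorem antitone (hx : FejerMonotone K x) {w : H} (hw : w ∈ K) :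
    Antitone fun n => ‖x n - w‖ :=
  antitone_nat_of_succ_le (hx w hw)

theorem norm_le (hx : FejerMonotone K x) {w : H} (hw : w ∈ K) (n : ℕ) :
    ‖x n‖ ≤ ‖x 0 - w‖ + ‖w‖ :=
  (norm_le_norm_sub_add (x n) w).trans (by linarith [hx.antitone hw (Nat.zero_le n)])

end FejerMonotone

theorem tendsto_zero_of_mul_norm_sq_le {ι : Type*} {l : Filter ι} {v : ι → H} {e : ι → ℝ}
    {κ : ℝ} (hκ : 0 < κ) (h : ∀ i, κ * ‖v i‖ ^ 2 ≤ e i) (he : Tendsto e l (𝓝 0)) :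
    Tendsto v l (𝓝 0) := by
  refine squeeze_zero_norm (a := fun i => √(e i / κ)) (fun i => ?_)
    (by simpa using (he.div_const κ).sqrt)
  exact Real.le_sqrt_of_sq_le (by rw [le_div_iff₀ hκ]; linarith [h i])

end NormedAddCommGroup

section InnerProductSpace

variable {H : Type*} [NormedAddCommGroup H] [InnerProductSpace ℝ H]

theorem norm_smul_add_one_sub_smul_sq (t : ℝ) (u v : H) :
    ‖t • u + (1 - t) • v‖ ^ 2
      = t * ‖u‖ ^ 2 + (1 - t) * ‖v‖ ^ 2 - t * (1 - t) * ‖u - v‖ ^ 2 := by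
  have h1 := norm_add_sq_real (t • u) ((1 - t) • v)
  have h2 := norm_sub_sq_real u v
  rw [real_inner_smul_left, real_inner_smul_right] at h1
  simp only [norm_smul, Real.norm_eq_abs, mul_pow, sq_abs] at h1
  linear_combination h1 + t * (1 - t) * h2

def InverseStronglyMonotone (c : ℝ) (B : H → H) : Prop :=
  ∀ x y, ⟪B x - B y, x - y⟫ ≥ c * ‖B x - B y‖ ^ 2

theorem inverseStronglyMonotone_id_sub {T : H → H} (hT : ∀ x y, ‖T x - T y‖ ≤ ‖x - y‖) :
    InverseStronglyMonotone (1 / 2) fun x => x - T x := by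
  intro x y
  have hexp := norm_sub_sq_real (x - y) ((x - T x) - (y - T y))
  have hTxy : (x - y) - ((x - T x) - (y - T y)) = T x - T y := by abel
  rw [hTxy, real_inner_comm] at hexp
  nlinarith [hT x y, norm_nonneg (T x - T y), norm_nonneg (x - y)]

namespace InverseStronglyMonotone

variable {c : ℝ} {B : H → H}

theorem norm_sub_le_inv_mul (hB : InverseStronglyMonotone c B) (hc : 0 < c) (x y : H) :
    ‖B x - B y‖ ≤ c⁻¹ * ‖x - y‖ := by
  rw [le_inv_mul_iff₀ hc]
  rcases (norm_nonneg (B x - B y)).eq_or_lt with h | h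
  · rw [← h, mul_zero]; exact norm_nonneg _
  · have h2 := (le_abs_self _).trans (abs_real_inner_le_norm (B x - B y) (x - y))
    nlinarith [hB x y]

theorem continuous (hB : InverseStronglyMonotone c B) (hc : 0 < c) : Continuous B :=
  (LipschitzWith.of_dist_le_mul (K := Real.toNNReal c⁻¹) fun x y => by
    rw [dist_eq_norm, dist_eq_norm, Real.coe_toNNReal _ (inv_nonneg.2 hc.le)]
    exact hB.norm_sub_le_inv_mul hc x y).continuous

theorem isClosed_zeros (hB : InverseStronglyMonotone c B) (hc : 0 < c) :
    IsClosed {x | B x = 0} :=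
  isClosed_eq (hB.continuous hc) continuous_const

theorem convex_zeros (hB : InverseStronglyMonotone c B) (hc : 0 < c) :
    Convex ℝ {x | B x = 0} := by
  intro u hu v hv s t hs ht hst
  set m := s • u + t • v
  have hu' := hB m u
  have hv' := hB m v
  simp only [Set.mem_ofPred_eq] at hu hv ⊢
  rw [hu, sub_zero] at hu'
  rw [hv, sub_zero] at hv'
  -- `s • (m - u) + t • (m - v) = 0`, so the two monotonicity inequalities cancel
  have hcomb : s * ⟪B m, m - u⟫ + t * ⟪B m, m - v⟫ = 0 := by
    rw [← real_inner_smul_right, ← real_inner_smul_right, ← inner_add_right]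
    convert inner_zero_right (B m) using 2
    obtain rfl : t = 1 - s := by linarith
    module
  have hsq : c * ‖B m‖ ^ 2 ≤ 0 := by nlinarith
  have : ‖B m‖ ^ 2 ≤ 0 := by nlinarith
  simpa using this

theorem norm_sub_smul_sub_sq_le (hB : InverseStronglyMonotone c B) {l : ℝ} (hl : 0 ≤ l)
    (x y : H) :
    ‖(x - l • B x) - (y - l • B y)‖ ^ 2 ≤ ‖x - y‖ ^ 2 - l * (2 * c - l) * ‖B x - B y‖ ^ 2 := by
  have hxy : (x - l • B x) - (y - l • B y) = (x - y) - l • (B x - B y) := by module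
  rw [hxy, norm_sub_sq_real, real_inner_smul_right, norm_smul, Real.norm_eq_abs, mul_pow,
    sq_abs, real_inner_comm]
  nlinarith [mul_le_mul_of_nonneg_left (hB x y) hl]

end InverseStronglyMonotone

def TendstoWeakly {ι : Type*} (x : ι → H) (l : Filter ι) (p : H) : Prop :=
  ∀ v, Tendsto (fun i => ⟪x i, v⟫) l (𝓝 ⟪p, v⟫)

section Weak

variable {ι : Type*} {x : ι → H} {l : Filter ι} {p : H} {M : ℝ}

theorem tendsto_inner_of_norm_le_of_tendsto_zero {v : ι → H} (hM : ∀ i, ‖x i‖ ≤ M)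
    (hv : Tendsto v l (𝓝 0)) : Tendsto (fun i => ⟪x i, v i⟫) l (𝓝 0) := by
  refine squeeze_zero_norm (a := fun i => M * ‖v i‖) (fun i => ?_) ?_
  · rw [Real.norm_eq_abs]
    exact (abs_real_inner_le_norm _ _).trans
      (mul_le_mul_of_nonneg_right (hM i) (norm_nonneg _))
  · simpa using (tendsto_zero_iff_norm_tendsto_zero.mp hv).const_mul M

theorem TendstoWeakly.tendsto_inner_sub {v : ι → H} {w : H} (hx : TendstoWeakly x l p)
    (hM : ∀ i, ‖x i‖ ≤ M) (hv : Tendsto v l (𝓝 w)) :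
    Tendsto (fun i => ⟪x i - p, v i⟫) l (𝓝 0) := by
  have hfix : Tendsto (fun i => ⟪x i - p, w⟫) l (𝓝 0) := by
    simpa [inner_sub_left] using (hx w).sub_const ⟪p, w⟫
  have hbound : ∀ i, ‖x i - p‖ ≤ M + ‖p‖ := fun i => (norm_sub_le _ _).trans (by linarith [hM i])
  have hmov := tendsto_inner_of_norm_le_of_tendsto_zero hbound (tendsto_sub_nhds_zero_iff.mpr hv)
  simpa [← inner_add_right] using hfix.add hmov

theorem exists_tendstoWeakly_ultrafilter [CompleteSpace H] (hM : ∀ i, ‖x i‖ ≤ M)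
    (U : Ultrafilter ι) : ∃ p, TendstoWeakly x U p := by
  set g : ι → WeakDual ℝ H := fun i => StrongDual.toWeakDual (InnerProductSpace.toDual ℝ H (x i))
  have hgB : ∀ i, g i ∈ WeakDual.toStrongDual ⁻¹' Metric.closedBall 0 M := fun i => by
    simpa [g] using hM i
  obtain ⟨f, -, hf⟩ := (WeakDual.isCompact_closedBall (0 : StrongDual ℝ H) M).ultrafilter_le_nhds
    (U.map g) (by rw [Ultrafilter.coe_map, le_principal_iff]; exact mem_map.mpr (univ_mem' hgB))
  refine ⟨(InnerProductSpace.toDual ℝ H).symm (WeakDual.toStrongDual f), fun v => ?_⟩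
  rw [InnerProductSpace.toDual_symm_apply]
  exact ((WeakDual.eval_continuous v).tendsto f).comp hf

theorem tendstoWeakly_of_forall_ultrafilter [CompleteSpace H] (hM : ∀ i, ‖x i‖ ≤ M)
    (h : ∀ (U : Ultrafilter ι) (q : H), ↑U ≤ l → TendstoWeakly x U q → q = p) :
    TendstoWeakly x l p := by
  intro v
  rw [tendsto_iff_ultrafilter]
  intro U hU
  obtain ⟨q, hq⟩ := exists_tendstoWeakly_ultrafilter hM U
  exact h U q hU hq ▸ hq v

end Weak

theorem InverseStronglyMonotone.eq_zero_of_tendstoWeakly {ι : Type*} {x : ι → H} {l : Filter ι}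
    [l.NeBot] {p : H} {M c : ℝ} {B : H → H} (hB : InverseStronglyMonotone c B) (hc : 0 < c)
    (hx : TendstoWeakly x l p) (hM : ∀ i, ‖x i‖ ≤ M) (hBx : Tendsto (fun i => B (x i)) l (𝓝 0)) :
    B p = 0 := by
  have hlhs : Tendsto (fun i => ⟪B (x i) - B p, x i - p⟫) l (𝓝 0) := by
    simpa only [real_inner_comm] using hx.tendsto_inner_sub hM (hBx.sub_const (B p))
  have hrhs : Tendsto (fun i => c * ‖B (x i) - B p‖ ^ 2) l (𝓝 (c * ‖B p‖ ^ 2)) := by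
    simpa using ((hBx.sub_const (B p)).norm.pow 2).const_mul c
  have hle : c * ‖B p‖ ^ 2 ≤ 0 := le_of_tendsto_of_tendsto' hrhs hlhs fun i => hB (x i) p
  have : ‖B p‖ ^ 2 ≤ 0 := by nlinarith
  simpa using this

section Projection

variable {K : Set H} {P : H → H}

theorem inner_sub_proj_le_zero (hK : Convex ℝ K)
    (hP : ∀ u, P u ∈ K ∧ ∀ w ∈ K, ‖u - P u‖ ≤ ‖u - w‖) (u : H) {w : H} (hw : w ∈ K) :
    ⟪u - P u, w - P u⟫ ≤ 0 := by
  refine (norm_eq_iInf_iff_real_inner_le_zero hK (hP u).1).mp ?_ w hw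
  have : Nonempty K := ⟨⟨P u, (hP u).1⟩⟩
  exact le_antisymm (le_ciInf fun w => (hP u).2 w w.2)
    (ciInf_le (f := fun w : K => ‖u - w‖)
      ⟨0, by rintro _ ⟨w, rfl⟩; exact norm_nonneg _⟩ ⟨P u, (hP u).1⟩)

theorem FejerMonotone.cauchySeq_proj {x : ℕ → H} (hx : FejerMonotone K x) (hK : Convex ℝ K)
    (hP : ∀ u, P u ∈ K ∧ ∀ w ∈ K, ‖u - P u‖ ≤ ‖u - w‖) : CauchySeq fun n => P (x n) := by
  set s : ℕ → ℝ := fun n => ‖x n - P (x n)‖ ^ 2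
  have hs : Antitone s := antitone_nat_of_succ_le fun n =>
    pow_le_pow_left₀ (norm_nonneg _)
      (((hP (x (n + 1))).2 _ (hP (x n)).1).trans (hx _ (hP (x n)).1 n)) 2
  have hstep : ∀ n m, n ≤ m → ‖P (x n) - P (x m)‖ ^ 2 ≤ s n - s m := fun n m hnm => by
    have hvi := inner_sub_proj_le_zero hK hP (x m) (hP (x n)).1
    have hexp := norm_sub_sq_real (x m - P (x m)) (P (x n) - P (x m))
    rw [sub_sub_sub_cancel_right] at hexp
    have hfej := pow_le_pow_left₀ (norm_nonneg _) (hx.antitone (hP (x n)).1 hnm) 2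
    simp only [s]
    linarith
  have hbdd : BddBelow (Set.range s) := ⟨0, by rintro _ ⟨n, rfl⟩; positivity⟩
  have hlim : Tendsto (fun n => s n - ⨅ k, s k) atTop (𝓝 0) := by
    simpa using (tendsto_atTop_ciInf hs hbdd).sub_const (⨅ k, s k)
  refine cauchySeq_of_le_tendsto_0' (fun n => √(s n - ⨅ k, s k)) (fun n m hnm => ?_)
    (by simpa using hlim.sqrt)
  rw [dist_eq_norm]
  exact Real.le_sqrt_of_sq_le ((hstep n m hnm).trans (by linarith [ciInf_le hbdd m]))

theorem eq_of_tendstoWeakly_of_tendsto_proj {ι : Type*} {x : ι → H} {l : Filter ι} [l.NeBot]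
    {p q : H} {M : ℝ} (hK : Convex ℝ K) (hP : ∀ u, P u ∈ K ∧ ∀ w ∈ K, ‖u - P u‖ ≤ ‖u - w‖)
    (hM : ∀ i, ‖x i‖ ≤ M) (hx : TendstoWeakly x l p) (hp : p ∈ K)
    (hq : Tendsto (fun i => P (x i)) l (𝓝 q)) : p = q := by
  have hlim : Tendsto (fun i => ⟪x i - P (x i), p - P (x i)⟫) l (𝓝 (‖p - q‖ ^ 2)) := by
    have hpq := tendsto_const_nhds (x := p).sub hq
    have := (hx.tendsto_inner_sub hM hpq).add (hpq.inner hpq)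
    rw [zero_add, real_inner_self_eq_norm_sq] at this
    refine this.congr fun i => ?_
    rw [← inner_add_left, sub_add_sub_cancel]
  have hle : ‖p - q‖ ^ 2 ≤ 0 := le_of_tendsto' hlim fun i => inner_sub_proj_le_zero hK hP (x i) hp
  simpa [sub_eq_zero] using hle

end Projection

section Scheme

variable {α : ℝ} {A T : H → H}

theorem InverseStronglyMonotone.norm_comp_sub_smul_sub_sq_le (hA : InverseStronglyMonotone α A)
    (hT : ∀ x y, ‖T x - T y‖ ≤ ‖x - y‖) {w : H} (hTw : T w = w) (hAw : A w = 0) {l : ℝ}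
    (hl : 0 ≤ l) (v : H) :
    ‖T (v - l • A v) - w‖ ^ 2 ≤ ‖v - w‖ ^ 2 - l * (2 * α - l) * ‖A v‖ ^ 2 := by
  have h := hA.norm_sub_smul_sub_sq_le hl v w
  rw [hAw, smul_zero, sub_zero, sub_zero] at h
  calc ‖T (v - l • A v) - w‖ ^ 2 = ‖T (v - l • A v) - T w‖ ^ 2 := by rw [hTw]
    _ ≤ ‖(v - l • A v) - w‖ ^ 2 := pow_le_pow_left₀ (norm_nonneg _) (hT _ _) 2
    _ ≤ _ := h

theorem InverseStronglyMonotone.norm_step_sub_sq_add_le (hA : InverseStronglyMonotone α A)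
    (hT : ∀ x y, ‖T x - T y‖ ≤ ‖x - y‖) {w : H} (hTw : T w = w) (hAw : A w = 0) {l t : ℝ}
    (hl₀ : 0 ≤ l) (hl : l ≤ 2 * α) (ht : t ≤ 1) {v y : H}
    (hy : y = t • v + (1 - t) • T (v - l • A v)) :
    ‖T (y - l • A y) - w‖ ^ 2
        + ((1 - t) * (l * (2 * α - l)) * ‖A v‖ ^ 2 + t * (1 - t) * ‖v - T (v - l • A v)‖ ^ 2)
      ≤ ‖v - w‖ ^ 2 := by
  have hz := hA.norm_comp_sub_smul_sub_sq_le hT hTw hAw hl₀ v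
  have hnext := hA.norm_comp_sub_smul_sub_sq_le hT hTw hAw hl₀ y
  have hyw : ‖y - w‖ ^ 2 = t * ‖v - w‖ ^ 2 + (1 - t) * ‖T (v - l • A v) - w‖ ^ 2
      - t * (1 - t) * ‖v - T (v - l • A v)‖ ^ 2 := by
    have hcomb : y - w = t • (v - w) + (1 - t) • (T (v - l • A v) - w) := by rw [hy]; module
    rw [hcomb, norm_smul_add_one_sub_smul_sq, sub_sub_sub_cancel_right]
  have hgain : 0 ≤ l * (2 * α - l) * ‖A y‖ ^ 2 :=
    mul_nonneg (mul_nonneg hl₀ (by linarith)) (sq_nonneg _)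
  nlinarith [mul_le_mul_of_nonneg_left hz (sub_nonneg.mpr ht)]

variable {a b c d : ℝ} {lam alp : ℕ → ℝ} {x y : ℕ → H}

theorem InverseStronglyMonotone.scheme_sq_add_le (hA : InverseStronglyMonotone α A)
    (hT : ∀ x y, ‖T x - T y‖ ≤ ‖x - y‖) (ha : 0 < a) (hb : b < 2 * α) (hc : 0 < c) (hd : d < 1)
    (hlam : ∀ n, lam n ∈ Set.Icc a b) (halp : ∀ n, alp n ∈ Set.Icc c d)
    (hy : ∀ n, y n = alp n • x n + (1 - alp n) • T (x n - lam n • A (x n)))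
    (hx : ∀ n, x (n + 1) = T (y n - lam n • A (y n))) {w : H} (hTw : T w = w) (hAw : A w = 0)
    (n : ℕ) :
    ‖x (n + 1) - w‖ ^ 2 + ((1 - d) * (a * (2 * α - b)) * ‖A (x n)‖ ^ 2
        + c * (1 - d) * ‖x n - T (x n - lam n • A (x n))‖ ^ 2) ≤ ‖x n - w‖ ^ 2 := by
  obtain ⟨hla, hlb⟩ := hlam n
  obtain ⟨htc, htd⟩ := halp n
  have hstep := hA.norm_step_sub_sq_add_le hT hTw hAw (ha.le.trans hla) (by linarith)
    (by linarith) (hy n)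
  rw [← hx n] at hstep
  have hκA : (1 - d) * (a * (2 * α - b)) ≤ (1 - alp n) * (lam n * (2 * α - lam n)) :=
    mul_le_mul (by linarith) (mul_le_mul hla (by linarith) (by linarith) (by linarith))
      (mul_nonneg ha.le (by linarith)) (by linarith)
  have hκz : c * (1 - d) ≤ alp n * (1 - alp n) :=
    mul_le_mul htc (by linarith) (by linarith) (by linarith)
  nlinarith [mul_le_mul_of_nonneg_right hκA (sq_nonneg ‖A (x n)‖),
    mul_le_mul_of_nonneg_right hκz (sq_nonneg ‖x n - T (x n - lam n • A (x n))‖)]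

theorem InverseStronglyMonotone.scheme_fejerMonotone (hA : InverseStronglyMonotone α A)
    (hT : ∀ x y, ‖T x - T y‖ ≤ ‖x - y‖) (ha : 0 < a) (hb : b < 2 * α) (hc : 0 < c) (hd : d < 1)
    (hlam : ∀ n, lam n ∈ Set.Icc a b) (halp : ∀ n, alp n ∈ Set.Icc c d)
    (hy : ∀ n, y n = alp n • x n + (1 - alp n) • T (x n - lam n • A (x n)))
    (hx : ∀ n, x (n + 1) = T (y n - lam n • A (y n))) :
    FejerMonotone ({w | T w = w} ∩ {w | A w = 0}) x := by
  rintro w ⟨hTw, hAw⟩ n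
  have hstep := hA.scheme_sq_add_le hT ha hb hc hd hlam halp hy hx hTw hAw n
  have hgain : 0 ≤ (1 - d) * (a * (2 * α - b)) * ‖A (x n)‖ ^ 2
      + c * (1 - d) * ‖x n - T (x n - lam n • A (x n))‖ ^ 2 := by
    have : 0 ≤ 2 * α - b := by linarith
    have : 0 ≤ 1 - d := by linarith
    positivity
  exact (pow_le_pow_iff_left₀ (norm_nonneg _) (norm_nonneg _) two_ne_zero).mp (by linarith)

theorem InverseStronglyMonotone.scheme_tendsto (hA : InverseStronglyMonotone α A)
    (hT : ∀ x y, ‖T x - T y‖ ≤ ‖x - y‖) (ha : 0 < a) (hb : b < 2 * α) (hc : 0 < c) (hd : d < 1)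
    (hlam : ∀ n, lam n ∈ Set.Icc a b) (halp : ∀ n, alp n ∈ Set.Icc c d)
    (hy : ∀ n, y n = alp n • x n + (1 - alp n) • T (x n - lam n • A (x n)))
    (hx : ∀ n, x (n + 1) = T (y n - lam n • A (y n))) {w : H} (hTw : T w = w) (hAw : A w = 0) :
    Tendsto (fun n => A (x n)) atTop (𝓝 0) ∧ Tendsto (fun n => x n - T (x n)) atTop (𝓝 0) := by
  set z := fun n => T (x n - lam n • A (x n))
  have hκA : 0 < (1 - d) * (a * (2 * α - b)) := by
    have : 0 < 2 * α - b := by linarith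
    have : 0 < 1 - d := by linarith
    positivity
  have hκz : 0 < c * (1 - d) := mul_pos hc (by linarith)
  have hgain := tendsto_zero_of_succ_add_le (fun n => sq_nonneg ‖x n - w‖) (fun n => by positivity)
    (hA.scheme_sq_add_le hT ha hb hc hd hlam halp hy hx hTw hAw)
  have hAx : Tendsto (fun n => A (x n)) atTop (𝓝 0) :=
    tendsto_zero_of_mul_norm_sq_le hκA (fun n => le_add_of_nonneg_right (by positivity)) hgain
  have hxz : Tendsto (fun n => x n - z n) atTop (𝓝 0) :=
    tendsto_zero_of_mul_norm_sq_le hκz (fun n => le_add_of_nonneg_left (by positivity)) hgain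
  refine ⟨hAx, squeeze_zero_norm (a := fun n => ‖x n - z n‖ + b * ‖A (x n)‖) (fun n => ?_) ?_⟩
  · have hzT : ‖z n - T (x n)‖ ≤ b * ‖A (x n)‖ := by
      calc ‖z n - T (x n)‖ ≤ ‖(x n - lam n • A (x n)) - x n‖ := hT _ _
        _ = lam n * ‖A (x n)‖ := by
          rw [sub_sub_cancel_left, norm_neg, norm_smul, Real.norm_eq_abs,
            abs_of_nonneg (ha.le.trans (hlam n).1)]
        _ ≤ b * ‖A (x n)‖ := mul_le_mul_of_nonneg_right (hlam n).2 (norm_nonneg _)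
    calc ‖x n - T (x n)‖ ≤ ‖x n - z n‖ + ‖z n - T (x n)‖ :=
          norm_sub_le_norm_sub_add_norm_sub _ _ _
      _ ≤ _ := by linarith
  · simpa using (tendsto_zero_iff_norm_tendsto_zero.mp hxz).add
      ((tendsto_zero_iff_norm_tendsto_zero.mp hAx).const_mul b)

end Scheme

end InnerProductSpace

theorem stmt_3_general
    {H : Type*} [NormedAddCommGroup H] [InnerProductSpace ℝ H] [CompleteSpace H]
    (α : ℝ) (hα : 0 < α) (A : H → H)
    (hA : ∀ x y : H, ⟪A x - A y, x - y⟫ ≥ α * ‖A x - A y‖ ^ 2)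
    (T : H → H) (hT : ∀ x y : H, ‖T x - T y‖ ≤ ‖x - y‖)
    (F : Set H)
    (hF : F = {x : H | T x = x} ∩ {x : H | A x = 0})
    (hFne : F.Nonempty)
    (a b c d : ℝ) (ha : 0 < a) (hb : b < 2 * α)
    (hc : 0 < c) (hd : d < 1)
    (lam : ℕ → ℝ) (hlam : ∀ n, lam n ∈ Set.Icc a b)
    (alp : ℕ → ℝ) (halp : ∀ n, alp n ∈ Set.Icc c d)
    (x y : ℕ → H)
    (hy : ∀ n, y n = alp n • x n + (1 - alp n) • T (x n - lam n • A (x n)))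
    (hx : ∀ n, x (n + 1) = T (y n - lam n • A (y n)))
    (PF : H → H) (hPF : ∀ u : H, PF u ∈ F ∧ ∀ w ∈ F, ‖u - PF u‖ ≤ ‖u - w‖) :
    ∃ p ∈ F,
      (∀ z : H, T z = z → ⟪A p, z - p⟫ ≥ 0) ∧
      (∀ u : H, Tendsto (fun n => ⟪x n, u⟫) atTop (𝓝 ⟪p, u⟫)) ∧
      Tendsto (fun n => PF (x n)) atTop (𝓝 p) := by
  subst hF
  obtain ⟨w, hTw, hAw⟩ := hFne
  have hAism : InverseStronglyMonotone α A := hA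
  have hTism := inverseStronglyMonotone_id_sub hT
  have hzeros : {x | T x = x} ∩ {x | A x = 0} = {x | x - T x = 0} ∩ {x | A x = 0} := by
    simp only [sub_eq_zero, eq_comm]
  have hconv : Convex ℝ ({x | T x = x} ∩ {x | A x = 0}) :=
    hzeros ▸ (hTism.convex_zeros one_half_pos).inter (hAism.convex_zeros hα)
  have hclosed : IsClosed ({x | T x = x} ∩ {x | A x = 0}) :=
    hzeros ▸ (hTism.isClosed_zeros one_half_pos).inter (hAism.isClosed_zeros hα)
  have hfejer := hAism.scheme_fejerMonotone hT ha hb hc hd hlam halp hy hx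
  have hM := hfejer.norm_le ⟨hTw, hAw⟩
  obtain ⟨hAx, hTx⟩ := hAism.scheme_tendsto hT ha hb hc hd hlam halp hy hx hTw hAw
  obtain ⟨q, hq⟩ := cauchySeq_tendsto_of_complete (hfejer.cauchySeq_proj hconv hPF)
  have hqF := hclosed.mem_of_tendsto hq (Eventually.of_forall fun n => (hPF (x n)).1)
  refine ⟨q, hqF, fun z _ => by rw [(hqF.2 : A q = 0), inner_zero_left],
    tendstoWeakly_of_forall_ultrafilter hM fun U p hU hp => ?_, hq⟩
  have hpF : p ∈ {x | T x = x} ∩ {x | A x = 0} := hzeros ▸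
    ⟨hTism.eq_zero_of_tendstoWeakly one_half_pos hp hM (hTx.mono_left hU),
      hAism.eq_zero_of_tendstoWeakly hα hp hM (hAx.mono_left hU)⟩
  exact eq_of_tendstoWeakly_of_tendsto_proj hconv hPF hM hp hpF (hq.mono_left hU)

theorem stmt_3
    {H : Type*} [NormedAddCommGroup H] [InnerProductSpace ℝ H] [CompleteSpace H]
    (α : ℝ) (hα : 0 < α) (A : H → H)
    (hA : ∀ x y : H, ⟪A x - A y, x - y⟫ ≥ α * ‖A x - A y‖ ^ 2)
    (T : H → H) (hT : ∀ x y : H, ‖T x - T y‖ ≤ ‖x - y‖)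
    (F : Set H)
    (hF : F = {x : H | T x = x} ∩ {x : H | A x = 0})
    (hFne : F.Nonempty)
    (a b c d : ℝ) (ha : 0 < a) (hab : a ≤ b) (hb : b < 2 * α)
    (hc : 0 < c) (hcd : c ≤ d) (hd : d < 1)
    (lam : ℕ → ℝ) (hlam : ∀ n, lam n ∈ Set.Icc a b)
    (alp : ℕ → ℝ) (halp : ∀ n, alp n ∈ Set.Icc c d)
    (x y : ℕ → H)
    (hy : ∀ n, y n = alp n • x n + (1 - alp n) • T (x n - lam n • A (x n)))
    (hx : ∀ n, x (n + 1) = T (y n - lam n • A (y n)))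
    (PF : H → H) (hPF : ∀ u : H, PF u ∈ F ∧ ∀ w ∈ F, ‖u - PF u‖ ≤ ‖u - w‖) :
    ∃ p ∈ F,
      (∀ z : H, T z = z → ⟪A p, z - p⟫ ≥ 0) ∧
      (∀ u : H, Tendsto (fun n => ⟪x n, u⟫) atTop (𝓝 ⟪p, u⟫)) ∧
      Tendsto (fun n => PF (x n)) atTop (𝓝 p) :=
  stmt_3_general α hα A hA T hT F hF hFne a b c d ha hb hc hd lam hlam alp halp x y hy hx PF hPF
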